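/- arXiv:1401.5458 — 8 statements merged into one kernel-verified Lean document; each statement's English description precedes it below -/
import Mathlib

section
/- Let r be a positive integer and a an integer with gcd(r, a−1) = 1. Let u, v ∈ ℤ² be primitive lattice points and suppose M ∈ GL(2,ℤ) satisfies M·u = (0,1) and M·v = (r, 1−a) (so the cone spanned by u and v has singularity type 1/r(1,a−1)). Then: (i) the gcd of the two coordinates of v − u equals gcd(r,a) (the width of the cone equals gcd(r,a)); and (ii) there exists a primitive pair (p,q) ∈ ℤ² with p·u₁ + q·u₂ = p·v₁ + q·v₂ = r/gcd(r,a) (the local index of the cone, i.e. the lattice height of the segment uv above the origin, equals r/gcd(r,a)). -/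
/-!
Since `M ∈ GL(2,ℤ)` preserves the gcd of the coordinates of a lattice vector, the width is
`gcd(M(v - u)) = gcd(r, -a)`. For the height, write `r = g r'`, `a = g a'` with `g = gcd(r, a)`;
the primitive functional `(a', r')` takes the value `r'` at both `Mu = (0, 1)` and
`Mv = (r, 1 - a)`, because `a' r = r' a`. Pulling it back along `M` gives the required `(p, q)`.
-/

open Matrix

theorem Matrix.dvd_mulVec_apply {n R : Type*} [Fintype n] [CommSemiring R]
    (A : Matrix n n R) {x : n → R} {d : R} (hd : ∀ j, d ∣ x j) (i : n) : d ∣ (A *ᵥ x) i :=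
  Finset.dvd_sum fun j _ => (hd j).mul_left _

namespace Int

theorem gcd_dvd_gcd_mulVec (A : Matrix (Fin 2) (Fin 2) ℤ) (x : Fin 2 → ℤ) :
    gcd (x 0) (x 1) ∣ gcd ((A *ᵥ x) 0) ((A *ᵥ x) 1) := by
  have hdvd : ∀ j, (gcd (x 0) (x 1) : ℤ) ∣ x j := by
    intro j
    fin_cases j
    · exact gcd_dvd_left _ _
    · exact gcd_dvd_right _ _
  exact_mod_cast dvd_coe_gcd (A.dvd_mulVec_apply hdvd 0) (A.dvd_mulVec_apply hdvd 1)

theorem gcd_mulVec_of_isUnit_det {A : Matrix (Fin 2) (Fin 2) ℤ} (hA : IsUnit A.det)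
    (x : Fin 2 → ℤ) : gcd ((A *ᵥ x) 0) ((A *ᵥ x) 1) = gcd (x 0) (x 1) := by
  refine Nat.dvd_antisymm ?_ (gcd_dvd_gcd_mulVec A x)
  have hx : A⁻¹ *ᵥ (A *ᵥ x) = x := by rw [mulVec_mulVec, nonsing_inv_mul A hA, one_mulVec]
  simpa only [hx] using gcd_dvd_gcd_mulVec A⁻¹ (A *ᵥ x)

theorem gcd_vecMul_of_isUnit_det {A : Matrix (Fin 2) (Fin 2) ℤ} (hA : IsUnit A.det)
    (x : Fin 2 → ℤ) : gcd ((x ᵥ* A) 0) ((x ᵥ* A) 1) = gcd (x 0) (x 1) := by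
  rw [← mulVec_transpose]
  exact gcd_mulVec_of_isUnit_det (isUnit_det_transpose A hA) x

end Int

theorem stmt_0_general (r a : ℤ) (hr : 0 < r)
    (u v : Fin 2 → ℤ)
    (M : Matrix (Fin 2) (Fin 2) ℤ) (hM : M.det = 1 ∨ M.det = -1)
    (hMu : M.mulVec u = ![0, 1]) (hMv : M.mulVec v = ![r, 1 - a]) :
    (Int.gcd (v 0 - u 0) (v 1 - u 1) = Int.gcd r a) ∧
    (∃ p q : ℤ, Int.gcd p q = 1 ∧
      p * u 0 + q * u 1 = r / (Int.gcd r a : ℤ) ∧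
      p * v 0 + q * v 1 = r / (Int.gcd r a : ℤ)) := by
  have hM' : IsUnit M.det := Int.isUnit_iff.mpr hM
  set g := Int.gcd r a
  have hg : 0 < g := Int.gcd_pos_of_ne_zero_left a hr.ne'
  obtain ⟨r', hr'⟩ : (g : ℤ) ∣ r := Int.gcd_dvd_left r a
  obtain ⟨a', ha'⟩ : (g : ℤ) ∣ a := Int.gcd_dvd_right r a
  have hrg : r / g = r' := by rw [hr']; exact Int.mul_ediv_cancel_left _ (by positivity)
  have hag : a / g = a' := by rw [ha']; exact Int.mul_ediv_cancel_left _ (by positivity)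
  have pullback_apply (w : Fin 2 → ℤ) : (![a', r'] ᵥ* M) 0 * w 0 + (![a', r'] ᵥ* M) 1 * w 1 =
      a' * (M *ᵥ w) 0 + r' * (M *ᵥ w) 1 := by
    simpa [dotProduct, Fin.sum_univ_two] using (dotProduct_mulVec ![a', r'] M w).symm
  refine ⟨?_, (![a', r'] ᵥ* M) 0, (![a', r'] ᵥ* M) 1, ?_, ?_, ?_⟩
  · have hvu : M *ᵥ (v - u) = ![r, -a] := by
      rw [mulVec_sub, hMu, hMv]
      ext i; fin_cases i <;> simp
    simpa [hvu, Int.gcd_neg] using (Int.gcd_mulVec_of_isUnit_det hM' (v - u)).symm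
  · rw [Int.gcd_vecMul_of_isUnit_det hM']
    have hcop := Int.gcd_div_gcd_div_gcd (i := a) (j := r) (by rwa [Int.gcd_comm])
    rwa [Int.gcd_comm a r, hag, hrg] at hcop
  · simp [pullback_apply, hMu, hrg]
  · rw [pullback_apply, hMv, hrg]
    simp only [cons_val_zero, cons_val_one]
    rw [hr', ha']
    ring

/-- For a cone of singularity type `1/r(1, a-1)` spanned by primitive
lattice points `u, v` (normalized by some `M ∈ GL(2,ℤ)` to `(0,1)` and `(r, 1-a)`),
the width of the cone (lattice length of `v - u`) equals `gcd(r, a)`, and the local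
index (lattice height of the segment `uv` above the origin, i.e. the common value of
a primitive linear functional at `u` and `v`) equals `r / gcd(r, a)`. -/
theorem stmt_0 (r a : ℤ) (hr : 0 < r) (hra : Int.gcd r (a - 1) = 1)
    (u v : Fin 2 → ℤ)
    (hu : Int.gcd (u 0) (u 1) = 1) (hv : Int.gcd (v 0) (v 1) = 1)
    (M : Matrix (Fin 2) (Fin 2) ℤ) (hM : M.det = 1 ∨ M.det = -1)
    (hMu : M.mulVec u = ![0, 1]) (hMv : M.mulVec v = ![r, 1 - a]) :
    (Int.gcd (v 0 - u 0) (v 1 - u 1) = Int.gcd r a) ∧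
    (∃ p q : ℤ, Int.gcd p q = 1 ∧
      p * u 0 + q * u 1 = r / (Int.gcd r a : ℤ) ∧
      p * v 0 + q * v 1 = r / (Int.gcd r a : ℤ)) :=
  stmt_0_general r a hr u v M hM hMu hMv
end

section
/- Let r be a positive integer and a an integer with gcd(r, a−1) = 1. Set u := (0,1), v := (r, 1−a), w := gcd(r,a), ℓ := r/w and δ := (ℓ, −a/w) ∈ ℤ². Then for every integer i, both lattice points u + i·ℓ·δ = (iℓ², 1 − iℓ·(a/w)) and v − i·ℓ·δ are primitive. In particular, all the subdivision points v₀, …, v_{n+1} of the segment from u to v used in the decomposition of the cone (which are of the form u + iℓδ or v − jℓδ with i, j ≥ 0) are primitive. -/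
/-!
Write `r = w ℓ` and `a = w a'`. Both families of points lie on the line `t ↦ (ℓ t, 1 - a' t)`,
at `t = iℓ` and `t = w - iℓ`. As `t` is always coprime to `1 - a' t`, such a point is
primitive once `ℓ` is coprime to `1 - a' t`, and modulo `ℓ` this second entry is `1` for
`t ≡ 0` and `1 - a` for `t ≡ w`; the latter is coprime even to `r`.
-/

section

variable {R : Type*} [CommRing R]

theorem IsCoprime.mul_one_sub_mul {l c t : R} (h : IsCoprime l (1 - c * t)) :
    IsCoprime (l * t) (1 - c * t) :=
  h.mul_left (IsCoprime.sub_mul_right_right_iff.mpr isCoprime_one_right)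

theorem isCoprime_one_sub_mul_add_mul_iff {l c t k : R} :
    IsCoprime l (1 - c * (t + l * k)) ↔ IsCoprime l (1 - c * t) := by
  rw [show 1 - c * (t + l * k) = 1 - c * t - l * (c * k) by ring,
    IsCoprime.sub_mul_left_right_iff]

end

theorem stmt_2_general (r a : ℤ) (hra : Int.gcd r (a - 1) = 1)
    (w l : ℤ) (hw : w = Int.gcd r a) (hl : l = r / w) :
    ∀ i : ℤ,
      Int.gcd (i * l * l) (1 - i * l * (a / w)) = 1 ∧
      Int.gcd (r - i * l * l) ((1 - a) + i * l * (a / w)) = 1 := by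
  intro i
  have hrl : r = w * l := by rw [hl, Int.mul_ediv_cancel' (hw ▸ Int.gcd_dvd_left r a)]
  have ha : a = w * (a / w) := (Int.mul_ediv_cancel' (hw ▸ Int.gcd_dvd_right r a)).symm
  set c := a / w
  have hlc : IsCoprime l (1 - c * w) := by
    rw [← Int.isCoprime_iff_gcd_eq_one, hrl] at hra
    rw [← IsCoprime.neg_right_iff, show -(1 - c * w) = a - 1 by rw [ha]; ring]
    exact hra.of_mul_left_right
  simp only [← Int.isCoprime_iff_gcd_eq_one]
  constructor
  · rw [show i * l * l = l * (0 + l * i) by ring,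
      show 1 - i * l * c = 1 - c * (0 + l * i) by ring]
    refine (isCoprime_one_sub_mul_add_mul_iff.mpr ?_).mul_one_sub_mul
    simpa using isCoprime_one_right
  · rw [show r - i * l * l = l * (w + l * -i) by rw [hrl]; ring,
      show 1 - a + i * l * c = 1 - c * (w + l * -i) by rw [ha]; ring]
    exact (isCoprime_one_sub_mul_add_mul_iff.mpr hlc).mul_one_sub_mul

/-- In the normalized setting `u = (0,1)`, `v = (r, 1-a)`,
`w = gcd(r,a)`, `ℓ = r/w`, `δ = (ℓ, -a/w)`, all the lattice points
`u + i·ℓ·δ = (iℓ², 1 - iℓ·(a/w))` and `v - i·ℓ·δ = (r - iℓ², 1 - a + iℓ·(a/w))`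
are primitive. -/
theorem stmt_2 (r a : ℤ) (hr : 0 < r) (hra : Int.gcd r (a - 1) = 1)
    (w l : ℤ) (hw : w = Int.gcd r a) (hl : l = r / w) :
    ∀ i : ℤ,
      Int.gcd (i * l * l) (1 - i * l * (a / w)) = 1 ∧
      Int.gcd (r - i * l * l) ((1 - a) + i * l * (a / w)) = 1 :=
  stmt_2_general r a hra w l hw hl
end

section
/- Let r be a positive integer and a an integer with gcd(r, a−1) = 1. Set u := (0,1), v := (r, 1−a), w := gcd(r,a), ℓ := r/w and δ := (ℓ, −a/w). Then for every integer i ≥ 0 there exists M ∈ GL(2,ℤ) with M·(u + iℓδ) = (0,1) and M·(u + (i+1)ℓδ) = (ℓ², 1 − ℓ·(a/w)). That is, each subcone spanned by consecutive points u + iℓδ and u + (i+1)ℓδ has singularity type 1/ℓ²(1, ℓa/w − 1); in particular these subcones are all lattice-isomorphic to one another. -/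
/-- In the normalized setting `u = (0,1)`, `v = (r, 1-a)`,
`w = gcd(r,a)`, `ℓ = r/w`, `δ = (ℓ, -a/w)`, each subcone spanned by the consecutive
points `u + iℓδ` and `u + (i+1)ℓδ` (for `i ≥ 0`) has singularity type
`1/ℓ²(1, ℓa/w - 1)`; in particular these subcones are all lattice-isomorphic. -/
theorem stmt_3 (r a : ℤ) (hr : 0 < r) (hra : Int.gcd r (a - 1) = 1)
    (w l : ℤ) (hw : w = Int.gcd r a) (hl : l = r / w) :
    ∀ i : ℤ, 0 ≤ i →
      ∃ M : Matrix (Fin 2) (Fin 2) ℤ, (M.det = 1 ∨ M.det = -1) ∧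
        M.mulVec ![i * l * l, 1 - i * l * (a / w)] = ![0, 1] ∧
        M.mulVec ![(i + 1) * l * l, 1 - (i + 1) * l * (a / w)] =
          ![l * l, 1 - l * (a / w)] := by
  intro i _
  set b := a / w with hb
  refine ⟨!![1 - i * l * b, -(i * l * l); i * b * b, 1 + i * l * b], ?_, ?_, ?_⟩
  · left
    simp [Matrix.det_fin_two_of]
    ring
  · funext j
    fin_cases j <;>
      simp [Matrix.mulVec, dotProduct, Fin.sum_univ_two] <;> ring
  · funext j
    fin_cases j <;>
      simp [Matrix.mulVec, dotProduct, Fin.sum_univ_two] <;> ring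
end

section
/- Let r be a positive integer and a an integer with gcd(r, a−1) = 1. Set u := (0,1), v := (r, 1−a), w := gcd(r,a), ℓ := r/w, δ := (ℓ, −a/w), and write w = nℓ + ρ with n, ρ ∈ ℤ≥0 and 0 ≤ ρ < ℓ. Assume ρ ≠ 0. Then for every integer m with 0 ≤ m ≤ n there exists M ∈ GL(2,ℤ) with M·(u + mℓδ) = (0,1) and M·(u + (mℓ+ρ)δ) = (ρℓ, 1 − ρ·(a/w)). That is, the subcone of width ρ in any position m within the decomposition of the cone has singularity type 1/ρℓ(1, ρa/w − 1); in particular this residual subcone is, up to lattice isomorphism, independent of the choice of m. -/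
/-- In the normalized setting `u = (0,1)`, `v = (r, 1-a)`,
`w = gcd(r,a)`, `ℓ = r/w`, `δ = (ℓ, -a/w)`, with `w = nℓ + ρ`, `0 < ρ < ℓ`:
for every `0 ≤ m ≤ n` the subcone spanned by `u + mℓδ` and `u + (mℓ+ρ)δ`
has singularity type `1/ρℓ(1, ρa/w - 1)`; in particular the residual subcone is,
up to lattice isomorphism, independent of the position `m`. -/
theorem stmt_4 (r a : ℤ) (hr : 0 < r) (hra : Int.gcd r (a - 1) = 1)
    (w l n ρ : ℤ) (hw : w = Int.gcd r a) (hl : l = r / w)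
    (hn : n = w / l) (hρ : ρ = w % l) (hρ0 : ρ ≠ 0) :
    ∀ m : ℤ, 0 ≤ m → m ≤ n →
      ∃ M : Matrix (Fin 2) (Fin 2) ℤ, (M.det = 1 ∨ M.det = -1) ∧
        M.mulVec ![m * l * l, 1 - m * l * (a / w)] = ![0, 1] ∧
        M.mulVec ![(m * l + ρ) * l, 1 - (m * l + ρ) * (a / w)] =
          ![ρ * l, 1 - ρ * (a / w)] := by
  intro m _ _
  set b : ℤ := a / w with hb
  refine ⟨!![1 - b * m * l, -(m * l * l); b * b * m, 1 + m * l * b], Or.inl ?_, ?_, ?_⟩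
  · simp [Matrix.det_fin_two]; ring
  · funext i
    fin_cases i <;>
      simp [Matrix.mulVec, dotProduct, Fin.sum_univ_two] <;> ring
  · funext i
    fin_cases i <;>
      simp [Matrix.mulVec, dotProduct, Fin.sum_univ_two] <;> ring
end

section
/- Let r be a positive integer and let a, ā be integers with (a−1)(ā−1) ≡ 1 (mod r). Set u := (0,1), v := (r, 1−a), w := gcd(r,a), ℓ := r/w and δ := (ℓ, −a/w). Then w divides ā, and for every integer j ≥ 0 there exists M ∈ GL(2,ℤ) with M·(v − jℓδ) = (0,1) and M·(v − (j+1)ℓδ) = (ℓ², 1 − ℓ·(ā/w)). That is, each subcone spanned by consecutive points v − (j+1)ℓδ and v − jℓδ, read from the ray through v, has singularity type 1/ℓ²(1, ℓā/w − 1). -/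
/-!
Write `r = wℓ`, `a = wα`, `ā = wβ`. Then `v - jℓδ = (ℓt, 1 - αt)` and
`v - (j+1)ℓδ = (ℓ(t - ℓ), 1 - α(t - ℓ))` with `t = w - jℓ`, and the congruence
`(a-1)(ā-1) ≡ 1 (mod r)`, divided by `w`, becomes `ℓ ∣ α + β - αβt`.
This divisibility is exactly what makes an explicit integral matrix of determinant `-1`
send the two points to `(0,1)` and `(ℓ², 1 - ℓβ)`.
-/

lemma mulVec_fin_two {R : Type*} [CommRing R] (a b c d x y : R) :
    (!![a, b; c, d]).mulVec ![x, y] = ![a * x + b * y, c * x + d * y] := by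
  ext i
  fin_cases i <;> simp [Matrix.mulVec, dotProduct]

lemma dvd_of_dvd_of_mul_sub_one_modEq {r w a abar : ℤ} (hwr : w ∣ r) (hwa : w ∣ a)
    (h : (a - 1) * (abar - 1) ≡ 1 [ZMOD r]) : w ∣ abar := by
  have hw : w ∣ (a - 1) * (abar - 1) - 1 := (h.of_dvd hwr).symm.dvd
  have e : abar = a * (abar - 1) - ((a - 1) * (abar - 1) - 1) := by ring
  rw [e]
  exact dvd_sub (dvd_mul_of_dvd_left hwa _) hw

lemma dvd_add_sub_mul_of_mul_sub_one_modEq {w l α β : ℤ} (hw : w ≠ 0)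
    (h : (w * α - 1) * (w * β - 1) ≡ 1 [ZMOD w * l]) (j : ℤ) :
    l ∣ α + β - α * β * (w - j * l) := by
  have hwl : w * l ∣ w * (w * α * β - α - β) := by
    have e : w * (w * α * β - α - β) = (w * α - 1) * (w * β - 1) - 1 := by ring
    exact e ▸ h.symm.dvd
  have hl : l ∣ w * α * β - α - β := (mul_dvd_mul_iff_left hw).mp hwl
  have e : α + β - α * β * (w - j * l) = -(w * α * β - α - β) + l * (α * β * j) := by ring
  rw [e]
  exact dvd_add hl.neg_right (dvd_mul_right l _)

lemma exists_unimodular_mulVec_eq_of_dvd {l t α β : ℤ} (hl : l ∣ α + β - α * β * t) :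
    ∃ M : Matrix (Fin 2) (Fin 2) ℤ, (M.det = 1 ∨ M.det = -1) ∧
      M.mulVec ![l * t, 1 - α * t] = ![0, 1] ∧
      M.mulVec ![l * (t - l), 1 - α * (t - l)] = ![l * l, 1 - l * β] := by
  obtain ⟨s, hs⟩ := hl
  -- The first row annihilates `(ℓt, 1 - αt)`; `hl` supplies the integer `s`
  -- that makes the determinant `-1`.
  refine ⟨!![α * t - 1, t * l; s, 1 - t * β], Or.inr ?_, ?_, ?_⟩
  · rw [Matrix.det_fin_two_of]
    linear_combination t * hs
  · rw [mulVec_fin_two]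
    exact Matrix.vec2_eq (by ring) (by linear_combination (-t) * hs)
  · rw [mulVec_fin_two]
    exact Matrix.vec2_eq (by ring) (by linear_combination (l - t) * hs)

/-- In the normalized setting `u = (0,1)`, `v = (r, 1-a)`,
`w = gcd(r,a)`, `ℓ = r/w`, `δ = (ℓ, -a/w)`, with `(a-1)(ā-1) ≡ 1 (mod r)`:
`w` divides `ā`, and each subcone spanned by the consecutive points `v - (j+1)ℓδ`
and `v - jℓδ` (for `j ≥ 0`), read from the ray through `v`, has singularity type
`1/ℓ²(1, ℓā/w - 1)`. -/
theorem stmt_5 (r a abar : ℤ) (hr : 0 < r)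
    (h : (a - 1) * (abar - 1) ≡ 1 [ZMOD r])
    (w l : ℤ) (hw : w = Int.gcd r a) (hl : l = r / w) :
    w ∣ abar ∧
    ∀ j : ℤ, 0 ≤ j →
      ∃ M : Matrix (Fin 2) (Fin 2) ℤ, (M.det = 1 ∨ M.det = -1) ∧
        M.mulVec ![r - j * l * l, (1 - a) + j * l * (a / w)] = ![0, 1] ∧
        M.mulVec ![r - (j + 1) * l * l, (1 - a) + (j + 1) * l * (a / w)] =
          ![l * l, 1 - l * (abar / w)] := by
  have hw0 : w ≠ 0 := by
    rw [hw]
    exact_mod_cast Int.gcd_ne_zero_left hr.ne'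
  have hwr : w ∣ r := hw ▸ Int.gcd_dvd_left r a
  have hwa : w ∣ a := hw ▸ Int.gcd_dvd_right r a
  have hwabar : w ∣ abar := dvd_of_dvd_of_mul_sub_one_modEq hwr hwa h
  refine ⟨hwabar, fun j _ => ?_⟩
  have hrl : r = w * l := by rw [hl, Int.mul_ediv_cancel' hwr]
  set α := a / w
  set β := abar / w
  have ha : a = w * α := (Int.mul_ediv_cancel' hwa).symm
  have hb : abar = w * β := (Int.mul_ediv_cancel' hwabar).symm
  rw [ha, hb, hrl] at h
  obtain ⟨M, hdet, hp, hq⟩ := exists_unimodular_mulVec_eq_of_dvd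
    (dvd_add_sub_mul_of_mul_sub_one_modEq hw0 h j)
  refine ⟨M, hdet, ?_, ?_⟩
  · convert hp using 2
    rw [hrl, ha]
    exact Matrix.vec2_eq (by ring) (by ring)
  · convert hq using 2
    rw [hrl, ha]
    exact Matrix.vec2_eq (by ring) (by ring)
end

section
/- Let r be a positive integer and let a, ā be integers with (a−1)(ā−1) ≡ 1 (mod r). Set w := gcd(r,a), ℓ := r/w, and let ρ be the remainder of w modulo ℓ (i.e. w = nℓ + ρ with n ∈ ℤ≥0 and 0 ≤ ρ < ℓ). Assume ρ ≠ 0. Then (ρ·(a/w) − 1)·(ρ·(ā/w) − 1) ≡ 1 (mod ρℓ). (Here w divides both a and ā, so a/w, ā/w ∈ ℤ.) Consequently the cyclic quotient singularities 1/ρℓ(1, ρa/w − 1) and 1/ρℓ(1, ρā/w − 1) are equivalent, i.e. the residue of the cone is well defined. -/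
/-!
Since `(xα - 1)(xβ - 1) - 1 = x(xαβ - α - β)`, for `x ≠ 0` the congruence
`(xα - 1)(xβ - 1) ≡ 1 (mod xℓ)` says exactly `xαβ ≡ α + β (mod ℓ)`, which depends only on
`x mod ℓ`. Writing `a = wα`, `ā = wβ`, `r = wℓ`, the hypothesis is this congruence for
`x = w`, and `ρ ≡ w (mod ℓ)` turns it into the one for `x = ρ`.
-/

namespace Int

theorem dvd_of_sub_one_mul_sub_one_modEq_one {r a b w : ℤ}
    (h : (a - 1) * (b - 1) ≡ 1 [ZMOD r]) (hwr : w ∣ r) (hwa : w ∣ a) : w ∣ b := by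
  have hw : w ∣ a + b - a * b := by
    have hexpand : 1 - (a - 1) * (b - 1) = a + b - a * b := by ring
    exact hexpand ▸ (h.of_dvd hwr).dvd
  have hb : b = (a + b - a * b) - a + a * b := by ring
  rw [hb]
  exact (hw.sub hwa).add (hwa.mul_right b)

theorem sub_one_mul_sub_one_modEq_one_iff {x l α β : ℤ} (hx : x ≠ 0) :
    (x * α - 1) * (x * β - 1) ≡ 1 [ZMOD x * l] ↔ x * α * β ≡ α + β [ZMOD l] := by
  have hexpand : 1 - (x * α - 1) * (x * β - 1) = x * (α + β - x * α * β) := by ring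
  rw [Int.modEq_iff_dvd, Int.modEq_iff_dvd, hexpand, mul_dvd_mul_iff_left hx]

theorem sub_one_mul_sub_one_modEq_one_of_modEq {w l ρ α β : ℤ} (hw : w ≠ 0) (hρ : ρ ≠ 0)
    (hρw : ρ ≡ w [ZMOD l]) (h : (w * α - 1) * (w * β - 1) ≡ 1 [ZMOD w * l]) :
    (ρ * α - 1) * (ρ * β - 1) ≡ 1 [ZMOD ρ * l] := by
  rw [sub_one_mul_sub_one_modEq_one_iff hw] at h
  rw [sub_one_mul_sub_one_modEq_one_iff hρ]
  exact ((hρw.mul_right α).mul_right β).trans h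

end Int

theorem stmt_7_general (r a abar : ℤ)
    (h : (a - 1) * (abar - 1) ≡ 1 [ZMOD r])
    (w l ρ : ℤ) (hw : w = Int.gcd r a) (hl : l = r / w) (hρ : ρ = w % l)
    (hρ0 : ρ ≠ 0) :
    (ρ * (a / w) - 1) * (ρ * (abar / w) - 1) ≡ 1 [ZMOD ρ * l] := by
  -- `w = 0` would force `l = r / 0 = 0` and `ρ = 0 % 0 = 0`.
  have hw0 : w ≠ 0 := by
    rintro rfl
    simp [hl, hρ] at hρ0
  have hwr : w ∣ r := hw ▸ Int.gcd_dvd_left r a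
  have hwa : w ∣ a := hw ▸ Int.gcd_dvd_right r a
  have hwabar : w ∣ abar := Int.dvd_of_sub_one_mul_sub_one_modEq_one h hwr hwa
  have hdiv : (w * (a / w) - 1) * (w * (abar / w) - 1) ≡ 1 [ZMOD w * l] := by
    rwa [Int.mul_ediv_cancel' hwa, Int.mul_ediv_cancel' hwabar, hl, Int.mul_ediv_cancel' hwr]
  exact Int.sub_one_mul_sub_one_modEq_one_of_modEq hw0 hρ0 (hρ ▸ Int.mod_modEq w l) hdiv

/-- With `(a-1)(ā-1) ≡ 1 (mod r)`, `w = gcd(r,a)`, `ℓ = r/w`,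
`ρ = w mod ℓ` and `ρ ≠ 0`, we have
`(ρ·(a/w) - 1)·(ρ·(ā/w) - 1) ≡ 1 (mod ρℓ)`: the residues `1/ρℓ(1, ρa/w - 1)` and
`1/ρℓ(1, ρā/w - 1)` are equivalent, so the residue of the cone is well defined. -/
theorem stmt_7 (r a abar : ℤ) (hr : 0 < r)
    (h : (a - 1) * (abar - 1) ≡ 1 [ZMOD r])
    (w l ρ : ℤ) (hw : w = Int.gcd r a) (hl : l = r / w) (hρ : ρ = w % l)
    (hρ0 : ρ ≠ 0) :
    (ρ * (a / w) - 1) * (ρ * (abar / w) - 1) ≡ 1 [ZMOD ρ * l] :=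
  stmt_7_general r a abar h w l ρ hw hl hρ hρ0
end

section
/- Let r be a positive integer and a an integer with 1 ≤ a ≤ r and gcd(r, a−1) = 1. Set w := gcd(r,a) and ℓ := r/w. Then ℓ divides w if and only if there exist positive integers n, d, c with gcd(d,c) = 1, r = n·d² and a = n·d·c. (Equivalently: the cone with u = (0,1), v = (r,1−a) has empty residue, i.e. its width is an integer multiple of its local index, if and only if it corresponds to a T-singularity 1/(nd²)(1, ndc − 1) with gcd(d,c) = 1; and in that case necessarily d = ℓ and w = nℓ.) -/
/-!
Write `w = gcd(r, a)`, so that `r = w ℓ` and `a = w a'` with `ℓ` and `a'` coprime.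
If `w = n ℓ`, this is the T-form with `d = ℓ` and `c = a'`.
Conversely, for `r = n d²` and `a = n d c` with `d`, `c` coprime we get `w = n d` and `ℓ = d`.
-/

theorem Int.gcd_mul_sq_mul_mul_of_gcd_eq_one {n d c : ℤ} (hnd : 0 ≤ n * d)
    (hdc : Int.gcd d c = 1) : (Int.gcd (n * d ^ 2) (n * d * c) : ℤ) = n * d := by
  rw [sq, ← mul_assoc, Int.gcd_mul_left, hdc, mul_one, Int.natCast_natAbs, abs_of_nonneg hnd]

theorem Int.ediv_gcd_dvd_gcd_of_gcd_eq_one {n d c : ℤ} (hnd : 0 < n * d)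
    (hdc : Int.gcd d c = 1) :
    n * d ^ 2 / Int.gcd (n * d ^ 2) (n * d * c) ∣ (Int.gcd (n * d ^ 2) (n * d * c) : ℤ) := by
  rw [Int.gcd_mul_sq_mul_mul_of_gcd_eq_one hnd.le hdc, sq, ← mul_assoc,
    Int.mul_ediv_cancel_left _ hnd.ne']
  exact Dvd.intro_left n rfl

theorem Int.exists_eq_mul_sq_of_ediv_gcd_dvd_gcd {r a : ℤ} (hr : 0 < r) (ha : 0 < a)
    (h : r / Int.gcd r a ∣ (Int.gcd r a : ℤ)) :
    ∃ n d c : ℤ, 0 < n ∧ 0 < d ∧ 0 < c ∧ Int.gcd d c = 1 ∧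
      r = n * d ^ 2 ∧ a = n * d * c := by
  have hgcd_pos : 0 < Int.gcd r a := Int.gcd_pos_of_ne_zero_left a hr.ne'
  have hw_pos : (0 : ℤ) < Int.gcd r a := Int.natCast_pos.mpr hgcd_pos
  set w : ℤ := (Int.gcd r a : ℤ)
  have hr_eq : r = w * (r / w) := (Int.mul_ediv_cancel' (Int.gcd_dvd_left r a)).symm
  have ha_eq : a = w * (a / w) := (Int.mul_ediv_cancel' (Int.gcd_dvd_right r a)).symm
  obtain ⟨n, hn⟩ := h
  have hl : 0 < r / w := pos_of_mul_pos_right (hr_eq ▸ hr) hw_pos.le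
  have hn_pos : 0 < n := pos_of_mul_pos_right (hn ▸ hw_pos) hl.le
  refine ⟨n, r / w, a / w, hn_pos, hl, pos_of_mul_pos_right (ha_eq ▸ ha) hw_pos.le,
    Int.gcd_div_gcd_div_gcd hgcd_pos, ?_, ?_⟩
  · rw [sq, ← mul_assoc, mul_comm n, ← hn]
    exact hr_eq
  · rw [mul_comm n, ← hn]
    exact ha_eq

theorem stmt_8_general (r a : ℤ) (hr : 0 < r) (ha1 : 1 ≤ a)
    (w l : ℤ) (hw : w = Int.gcd r a) (hl : l = r / w) :
    l ∣ w ↔ ∃ n d c : ℤ, 0 < n ∧ 0 < d ∧ 0 < c ∧ Int.gcd d c = 1 ∧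
      r = n * d ^ 2 ∧ a = n * d * c := by
  subst hw hl
  refine ⟨Int.exists_eq_mul_sq_of_ediv_gcd_dvd_gcd hr ha1, ?_⟩
  rintro ⟨n, d, c, hn, hd, -, hdc, rfl, rfl⟩
  exact Int.ediv_gcd_dvd_gcd_of_gcd_eq_one (mul_pos hn hd) hdc

/-- For `1 ≤ a ≤ r` with `gcd(r, a-1) = 1`, `w = gcd(r,a)`, `ℓ = r/w`:
`ℓ ∣ w` (i.e. the cone has empty residue) if and only if there exist positive
integers `n, d, c` with `gcd(d,c) = 1`, `r = nd²` and `a = ndc` (i.e. the cone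
corresponds to a T-singularity `1/(nd²)(1, ndc - 1)`). -/
theorem stmt_8 (r a : ℤ) (hr : 0 < r) (ha1 : 1 ≤ a) (har : a ≤ r)
    (hra : Int.gcd r (a - 1) = 1)
    (w l : ℤ) (hw : w = Int.gcd r a) (hl : l = r / w) :
    l ∣ w ↔ ∃ n d c : ℤ, 0 < n ∧ 0 < d ∧ 0 < c ∧ Int.gcd d c = 1 ∧
      r = n * d ^ 2 ∧ a = n * d * c :=
  stmt_8_general r a hr ha1 w l hw hl
end

section
/- Let r be a positive integer and let a, ā be integers with (a−1)(ā−1) ≡ 1 (mod r). Set w := gcd(r,a), ℓ := r/w, and let ρ be the remainder of w modulo ℓ; assume ρ ≠ 0. Then there exists M ∈ GL(2,ℤ) with M·(ρℓ, 1 − ρ·(a/w)) = (0,1) and M·(0,1) = (ρℓ, 1 − ρ·(ā/w)). That is, the normalized residual cone computed from the description 1/r(1,a−1) of the singularity is lattice-isomorphic to the normalized residual cone computed from the description 1/r(1,ā−1): the residue of a cone is well defined up to lattice isomorphism, independently of the decomposition chosen. -/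
/-!
With `A = a/w`, `B = ā/w` and `l = r/w`, the congruence `r ∣ (a-1)(ā-1) - 1 = w(wAB - A - B)`
gives `l ∣ wAB - A - B`, and since `w ≡ ρ (mod l)` also `l ∣ A + B - ρAB`, say `l t = A + B - ρAB`.
The matrix `!![ρA - 1, ρl; t, 1 - ρB]` then has determinant `-1` precisely because of this
relation.
-/

namespace Int

theorem dvd_of_sub_one_mul_sub_one_modEq {r d a b : ℤ} (h : (a - 1) * (b - 1) ≡ 1 [ZMOD r])
    (hdr : d ∣ r) (hda : d ∣ a) : d ∣ b := by
  rw [show b = a * (b - 1) - ((a - 1) * (b - 1) - 1) by ring]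
  exact dvd_sub (hda.mul_right _) (hdr.trans h.symm.dvd)

theorem dvd_add_sub_mul_mul_of_modEq {w l ρ A B : ℤ} (hw : w ≠ 0)
    (h : (w * A - 1) * (w * B - 1) ≡ 1 [ZMOD w * l]) (hρ : ρ ≡ w [ZMOD l]) :
    l ∣ A + B - ρ * A * B := by
  have hwl : w * l ∣ w * (w * A * B - (A + B)) := by
    rw [show w * (w * A * B - (A + B)) = (w * A - 1) * (w * B - 1) - 1 by ring]
    exact h.symm.dvd
  have hl : l ∣ w * A * B - (A + B) := (mul_dvd_mul_iff_left hw).1 hwl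
  rw [show A + B - ρ * A * B = (w - ρ) * (A * B) - (w * A * B - (A + B)) by ring]
  exact dvd_sub (hρ.dvd.mul_right _) hl

end Int

theorem Matrix.mulVec_fin_two_of {α : Type*} [NonUnitalNonAssocSemiring α] (p q r s x y : α) :
    !![p, q; r, s].mulVec ![x, y] = ![p * x + q * y, r * x + s * y] :=
  (Matrix.mulVecᵣ_eq _ _).symm

theorem exists_unimodular_of_dvd_add_sub_mul_mul {l ρ A B : ℤ} (hl : l ∣ A + B - ρ * A * B) :
    ∃ M : Matrix (Fin 2) (Fin 2) ℤ, (M.det = 1 ∨ M.det = -1) ∧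
      M.mulVec ![ρ * l, 1 - ρ * A] = ![0, 1] ∧ M.mulVec ![0, 1] = ![ρ * l, 1 - ρ * B] := by
  obtain ⟨t, ht⟩ := hl
  refine ⟨!![ρ * A - 1, ρ * l; t, 1 - ρ * B], Or.inr ?_, ?_, ?_⟩
  · rw [Matrix.det_fin_two_of]
    linear_combination ρ * ht
  · rw [Matrix.mulVec_fin_two_of]
    exact Matrix.vec2_eq (by ring) (by linear_combination -ρ * ht)
  · rw [Matrix.mulVec_fin_two_of]
    exact Matrix.vec2_eq (by ring) (by ring)

theorem stmt_9_general (r a abar : ℤ) (hr : 0 < r)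
    (h : (a - 1) * (abar - 1) ≡ 1 [ZMOD r])
    (w l ρ : ℤ) (hw : w = Int.gcd r a) (hl : l = r / w) (hρ : ρ = w % l) :
    ∃ M : Matrix (Fin 2) (Fin 2) ℤ, (M.det = 1 ∨ M.det = -1) ∧
      M.mulVec ![ρ * l, 1 - ρ * (a / w)] = ![0, 1] ∧
      M.mulVec ![0, 1] = ![ρ * l, 1 - ρ * (abar / w)] := by
  have hw0 : w ≠ 0 := hw ▸ Int.natCast_ne_zero.2 (Int.gcd_ne_zero_left hr.ne')
  have hwr : w ∣ r := hw ▸ Int.gcd_dvd_left r a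
  have hwa : w ∣ a := hw ▸ Int.gcd_dvd_right r a
  have hwb : w ∣ abar := Int.dvd_of_sub_one_mul_sub_one_modEq h hwr hwa
  have hr' : r = w * l := hl ▸ (Int.mul_ediv_cancel' hwr).symm
  rw [← Int.mul_ediv_cancel' hwa, ← Int.mul_ediv_cancel' hwb, hr'] at h
  refine exists_unimodular_of_dvd_add_sub_mul_mul (Int.dvd_add_sub_mul_mul_of_modEq hw0 h ?_)
  rw [hρ]
  exact Int.mod_modEq w l

/-- With `(a-1)(ā-1) ≡ 1 (mod r)`, `w = gcd(r,a)`, `ℓ = r/w`,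
`ρ = w mod ℓ` and `ρ ≠ 0`, there exists `M ∈ GL(2,ℤ)` with
`M·(ρℓ, 1 - ρ·(a/w)) = (0,1)` and `M·(0,1) = (ρℓ, 1 - ρ·(ā/w))`: the normalized
residual cones computed from the two descriptions `1/r(1, a-1)` and `1/r(1, ā-1)`
of the singularity are lattice-isomorphic, so the residue of a cone is well defined
up to lattice isomorphism, independently of the decomposition chosen. -/
theorem stmt_9 (r a abar : ℤ) (hr : 0 < r)
    (h : (a - 1) * (abar - 1) ≡ 1 [ZMOD r])
    (w l ρ : ℤ) (hw : w = Int.gcd r a) (hl : l = r / w) (hρ : ρ = w % l)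
    (hρ0 : ρ ≠ 0) :
    ∃ M : Matrix (Fin 2) (Fin 2) ℤ, (M.det = 1 ∨ M.det = -1) ∧
      M.mulVec ![ρ * l, 1 - ρ * (a / w)] = ![0, 1] ∧
      M.mulVec ![0, 1] = ![ρ * l, 1 - ρ * (abar / w)] :=
  stmt_9_general r a abar hr h w l ρ hw hl hρ
end
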